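/- Let σ : ℝ → ℝ be (q+1)-times continuously differentiable with bounded derivatives, and let u_σ ∈ ℝ be a point where σ^{(q)}(u_σ) ≠ 0. Define γ_k = (-1)^{q+k-1} / σ^{(q)}(u_σ) * C(q, k-1) and β_k = k-1 for k = 1, ..., q+1. Then there exists a constant C > 0 such that for every x_0 ∈ ℝ and every h ∈ (0,1], sup_{|x - x_0| ≤ h} | ∑_{k=1}^{q+1} γ_k σ(β_k (x - x_0) + u_σ) − (x − x_0)^q | ≤ C h^{q+1}. -/

import Mathlib

/-!
Expand each neuron `σ (k * t + u)` by Taylor's formula of order `q` at `u`. The weights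
`(-1)^(q+k) * C(q,k)` compute the `q`-th forward difference at `0`, which kills the monomials
`k^j` with `j < q` and sends `k^q` to `q!`; hence the Taylor polynomials combine to exactly `t^q`,
and only the Lagrange remainders, each at most `B * |k * t|^(q+1) / (q+1)!`, are left.
-/

open Finset Nat Set

section FiniteDifference

variable {R : Type*} [CommRing R]

theorem alternating_sum_range_choose_mul_eq_fwdDiff_iter (f : R → R) (n : ℕ) :
    ∑ k ∈ range (n + 1), (-1 : R) ^ (n + k) * n.choose k * f k = (fwdDiff 1)^[n] f 0 := by
  rw [fwdDiff_iter_eq_sum_shift]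
  refine sum_congr rfl fun k hk => ?_
  have hkn : k ≤ n := Nat.lt_succ_iff.mp (mem_range.mp hk)
  have hsign : (-1 : R) ^ (n + k) = (-1) ^ (n - k) := by
    rw [← Nat.sub_add_cancel hkn, Nat.add_sub_cancel, add_assoc, pow_add, ← two_mul, pow_mul]
    simp
  simp [hsign, zsmul_eq_mul]

theorem alternating_sum_range_choose_mul_poly (a : ℕ → R) (n : ℕ) :
    ∑ k ∈ range (n + 1), (-1 : R) ^ (n + k) * n.choose k * ∑ j ∈ range (n + 1), a j * (k : R) ^ j
      = n ! * a n := by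
  have hsplit : (fun r : R => ∑ j ∈ range (n + 1), a j * r ^ j)
      = (fun r => ∑ j ∈ range n, a j * r ^ j) + a n • fun r => r ^ n := by
    ext r
    simp [sum_range_succ]
  rw [alternating_sum_range_choose_mul_eq_fwdDiff_iter (fun r => ∑ j ∈ range (n + 1), a j * r ^ j),
    hsplit, fwdDiff_iter_add, fwdDiff_iter_sum_mul_pow_eq_zero, fwdDiff_iter_const_smul,
    fwdDiff_iter_eq_factorial]
  simp [mul_comm]

end FiniteDifference

theorem taylorWithinEval_eq_univ {f : ℝ → ℝ} {n : ℕ} (hf : ContDiff ℝ n f) {s : Set ℝ}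
    (hs : UniqueDiffOn ℝ s) {x₀ : ℝ} (hx₀ : x₀ ∈ s) (x : ℝ) :
    taylorWithinEval f n s x₀ x = taylorWithinEval f n univ x₀ x := by
  simp only [taylor_within_apply, iteratedDerivWithin_univ]
  refine sum_congr rfl fun k hk => ?_
  rw [iteratedDerivWithin_eq_iteratedDeriv hs
    (hf.contDiffAt.of_le (by exact_mod_cast Nat.lt_succ_iff.mp (mem_range.mp hk))) hx₀]

theorem abs_sub_taylorWithinEval_univ_le {f : ℝ → ℝ} {n : ℕ} (hf : ContDiff ℝ (n + 1) f) {B : ℝ}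
    (hB : ∀ x, |iteratedDeriv (n + 1) f x| ≤ B) (x₀ x : ℝ) :
    |f x - taylorWithinEval f n univ x₀ x| ≤ B * |x - x₀| ^ (n + 1) / (n + 1)! := by
  rcases eq_or_ne x₀ x with rfl | hx
  · simp
  obtain ⟨x', -, hrem⟩ := taylor_mean_remainder_lagrange_iteratedDeriv hx hf.contDiffOn
  rw [← taylorWithinEval_eq_univ hf.of_succ (uniqueDiffOn_uIcc hx) left_mem_uIcc, hrem,
    abs_div, abs_mul, abs_pow, Nat.abs_cast]
  gcongr
  exact hB x'

-- The paper's `γ_{k+1}`, the weight of the neuron with inner weight `β_{k+1} = k`.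
noncomputable def monomialWeight (σ : ℝ → ℝ) (q : ℕ) (u : ℝ) (k : ℕ) : ℝ :=
  (-1) ^ (q + k) / iteratedDeriv q σ u * q.choose k

section MonomialNetwork

variable {σ : ℝ → ℝ} {q : ℕ} {u : ℝ}

theorem sum_monomialWeight_mul_taylorWithinEval (hu : iteratedDeriv q σ u ≠ 0) (t : ℝ) :
    ∑ k ∈ range (q + 1), monomialWeight σ q u k * taylorWithinEval σ q univ u (k * t + u)
      = t ^ q := by
  have htaylor (k : ℕ) : taylorWithinEval σ q univ u (k * t + u)
      = ∑ j ∈ range (q + 1), iteratedDeriv j σ u * t ^ j / j ! * (k : ℝ) ^ j := by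
    simp only [taylor_within_apply, iteratedDerivWithin_univ, add_sub_cancel_right, smul_eq_mul]
    exact sum_congr rfl fun j _ => by ring
  calc ∑ k ∈ range (q + 1), monomialWeight σ q u k * taylorWithinEval σ q univ u (k * t + u)
      = (iteratedDeriv q σ u)⁻¹ * ∑ k ∈ range (q + 1), (-1 : ℝ) ^ (q + k) * q.choose k *
          ∑ j ∈ range (q + 1), iteratedDeriv j σ u * t ^ j / j ! * (k : ℝ) ^ j := by
        simp only [mul_sum, htaylor, monomialWeight]
        exact sum_congr rfl fun k _ => sum_congr rfl fun j _ => by ring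
    _ = t ^ q := by
        rw [alternating_sum_range_choose_mul_poly]
        field_simp

theorem abs_sum_monomialWeight_mul_sub_pow_le (hσ : ContDiff ℝ (q + 1) σ) {B : ℝ}
    (hB : ∀ x, |iteratedDeriv (q + 1) σ x| ≤ B) (hu : iteratedDeriv q σ u ≠ 0) (t : ℝ) :
    |∑ k ∈ range (q + 1), monomialWeight σ q u k * σ (k * t + u) - t ^ q|
      ≤ B / (q + 1)! * (∑ k ∈ range (q + 1), |monomialWeight σ q u k| * (k : ℝ) ^ (q + 1)) *
          |t| ^ (q + 1) := by
  rw [← sum_monomialWeight_mul_taylorWithinEval hu t, ← sum_sub_distrib]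
  calc |∑ k ∈ range (q + 1), (monomialWeight σ q u k * σ (k * t + u)
          - monomialWeight σ q u k * taylorWithinEval σ q univ u (k * t + u))|
      ≤ ∑ k ∈ range (q + 1), |monomialWeight σ q u k| *
          (B * |(k * t + u) - u| ^ (q + 1) / (q + 1)!) := by
        refine (abs_sum_le_sum_abs _ _).trans (sum_le_sum fun k _ => ?_)
        rw [← mul_sub, abs_mul]
        exact mul_le_mul_of_nonneg_left (abs_sub_taylorWithinEval_univ_le hσ hB u _) (abs_nonneg _)
    _ = B / (q + 1)! * (∑ k ∈ range (q + 1), |monomialWeight σ q u k| * (k : ℝ) ^ (q + 1)) *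
          |t| ^ (q + 1) := by
        simp only [add_sub_cancel_right, abs_mul, Nat.abs_cast, mul_pow, mul_sum, sum_mul]
        exact sum_congr rfl fun k _ => by ring

end MonomialNetwork

/-- A one-hidden-layer network with `q+1` neurons, activation `σ`, weights
`γ_k = (-1)^(q+k-1)/σ^{(q)}(u) * C(q,k-1)` and `β_k = k-1`, approximates the monomial
`(x - x₀)^q` uniformly on `[x₀ - h, x₀ + h]` with error `O(h^(q+1))`. -/
theorem lnn_monomial_approx (q : ℕ) (σ : ℝ → ℝ)
    (hσ : ContDiff ℝ (q + 1 : ℕ) σ)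
    (hbound : ∃ B : ℝ, ∀ j : ℕ, j ≤ q + 1 → ∀ x : ℝ, |iteratedDeriv j σ x| ≤ B)
    (u : ℝ) (hu : iteratedDeriv q σ u ≠ 0) :
    ∃ C : ℝ, 0 < C ∧ ∀ x₀ h : ℝ, 0 < h → h ≤ 1 → ∀ x : ℝ, |x - x₀| ≤ h →
      |(∑ k ∈ Finset.range (q + 1),
          ((-1 : ℝ) ^ (q + k) / iteratedDeriv q σ u * (q.choose k : ℝ)) *
            σ ((k : ℝ) * (x - x₀) + u)) - (x - x₀) ^ q|
        ≤ C * h ^ (q + 1) := by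
  obtain ⟨B, hB⟩ := hbound
  have hB₀ : 0 ≤ B := (abs_nonneg _).trans (hB 0 (Nat.zero_le _) 0)
  set K := B / (q + 1)! * ∑ k ∈ range (q + 1), |monomialWeight σ q u k| * (k : ℝ) ^ (q + 1)
  have hK : 0 ≤ K := by positivity
  refine ⟨K + 1, by positivity, fun x₀ h _ _ x hx => ?_⟩
  calc _ ≤ K * |x - x₀| ^ (q + 1) :=
        abs_sum_monomialWeight_mul_sub_pow_le hσ (hB (q + 1) le_rfl) hu _
    _ ≤ K * h ^ (q + 1) := by gcongr
    _ ≤ (K + 1) * h ^ (q + 1) := by gcongr; linarith
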